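/- arXiv:2202.02672 — 2 statements merged into one kernel-verified Lean document; each statement's English description precedes it below -/
import Mathlib

section
/- Consider the goods instance with three agents and five goods g_1, g_2, g_3, g_4, g_5, where every agent values each of g_1, g_2, g_3, g_4 at 3 and values g_5 at 1 (identical valuations). No allocation of these five goods among the three agents is PropX. -/
open scoped Classical
open Finset

noncomputable section FairDivision

variable {N I : Type*}

/-- Additive value of agent `i` for a bundle `S`. -/
def bval (v : N → I → ℝ) (i : N) (S : Finset I) : ℝ := ∑ j ∈ S, v i j

/-- `x` is an allocation of the item set `S`: the bundles are pairwise disjoint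
and together cover exactly `S`. -/
def IsAllocation [Fintype N] (x : N → Finset I) (S : Finset I) : Prop :=
  (∀ i h : N, i ≠ h → Disjoint (x i) (x h)) ∧ Finset.univ.biUnion x = S

/-- Envy-freeness up to any item (mixed manna version). -/
def EFX (v : N → I → ℝ) (x : N → Finset I) : Prop :=
  ∀ i h : N,
    (∀ g ∈ x h, 0 < v i g → bval v i (x i) ≥ bval v i ((x h).erase g)) ∨
    (∀ c ∈ x i, v i c < 0 → bval v i ((x i).erase c) ≥ bval v i (x h))

/-- The stronger notion EFX₀, where goods of zero value are also considered. -/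
def EFX0 (v : N → I → ℝ) (x : N → Finset I) : Prop :=
  ∀ i h : N,
    (∀ g ∈ x h, 0 ≤ v i g → bval v i (x i) ≥ bval v i ((x h).erase g)) ∨
    (∀ c ∈ x i, v i c < 0 → bval v i ((x i).erase c) ≥ bval v i (x h))

/-- `dpos v x i`: the maximin good value `d_i(x)`: the maximum, over agents `h ≠ i`
whose bundle contains an item valued positively by `i`, of the minimum value
(for `i`) of such an item in `x h`; `0` if no such agent exists. -/
def dpos [Fintype N] (v : N → I → ℝ) (x : N → Finset I) (i : N) : ℝ :=
  if hA : (Finset.univ.filter fun h =>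
      h ≠ i ∧ ((x h).filter fun j => 0 < v i j).Nonempty).Nonempty then
    (Finset.univ.filter fun h =>
        h ≠ i ∧ ((x h).filter fun j => 0 < v i j).Nonempty).sup' hA fun h =>
      if hB : ((x h).filter fun j => 0 < v i j).Nonempty then
        ((x h).filter fun j => 0 < v i j).inf' hB fun j => v i j
      else 0
  else 0

/-- `dnn v x i`: the variant `d⁰_i(x)` of the maximin good value where
nonnegatively-valued items are considered. -/
def dnn [Fintype N] (v : N → I → ℝ) (x : N → Finset I) (i : N) : ℝ :=
  if hA : (Finset.univ.filter fun h =>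
      h ≠ i ∧ ((x h).filter fun j => 0 ≤ v i j).Nonempty).Nonempty then
    (Finset.univ.filter fun h =>
        h ≠ i ∧ ((x h).filter fun j => 0 ≤ v i j).Nonempty).sup' hA fun h =>
      if hB : ((x h).filter fun j => 0 ≤ v i j).Nonempty then
        ((x h).filter fun j => 0 ≤ v i j).inf' hB fun j => v i j
      else 0
  else 0

/-- Proportional share of agent `i`. -/
def propShare [Fintype N] (v : N → I → ℝ) (M : Finset I) (i : N) : ℝ :=
  bval v i M / (Fintype.card N : ℝ)

/-- Proportionality up to the maximin good or any bad. -/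
def PropMX [Fintype N] (v : N → I → ℝ) (M : Finset I) (x : N → Finset I) : Prop :=
  ∀ i : N,
    bval v i (x i) + dpos v x i ≥ propShare v M i ∨
    (∀ c ∈ x i, v i c < 0 → bval v i ((x i).erase c) ≥ propShare v M i)

/-- The stronger notion PropMX₀. -/
def PropMX0 [Fintype N] (v : N → I → ℝ) (M : Finset I) (x : N → Finset I) : Prop :=
  ∀ i : N,
    bval v i (x i) + dnn v x i ≥ propShare v M i ∨
    (∀ c ∈ x i, v i c < 0 → bval v i ((x i).erase c) ≥ propShare v M i)

/-- Utilitarian social welfare. -/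
def SW [Fintype N] (v : N → I → ℝ) (x : N → Finset I) : ℝ :=
  ∑ i : N, bval v i (x i)

/-- `y` Pareto-dominates `x`. -/
def ParetoDominates [Fintype N] (v : N → I → ℝ) (y x : N → Finset I) : Prop :=
  (∀ i : N, bval v i (y i) ≥ bval v i (x i)) ∧ ∃ h : N, bval v h (y h) > bval v h (x h)

/-- `x` is Pareto-optimal among allocations of `M`. -/
def ParetoOptimal [Fintype N] (v : N → I → ℝ) (M : Finset I) (x : N → Finset I) : Prop :=
  ¬ ∃ y : N → Finset I, IsAllocation y M ∧ ParetoDominates v y x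

/-- `x` maximizes the social welfare over all allocations of `M`. -/
def MaxSW [Fintype N] (v : N → I → ℝ) (M : Finset I) (x : N → Finset I) : Prop :=
  ∀ y : N → Finset I, IsAllocation y M → SW v y ≤ SW v x

/-- A set `B` of (pure bad) items is identically ordered (IDO): it can be enumerated
as `c₁, …, c_k` with `v i c₁ ≤ v i c₂ ≤ … ≤ v i c_k` for every agent `i`. -/
def IDO (v : N → I → ℝ) (B : Finset I) : Prop :=
  ∃ l : List I, l.Nodup ∧ l.toFinset = B ∧ ∀ i : N, (l.map (v i)).Pairwise (· ≤ ·)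

end FairDivision

/-- The valuations of the counterexample: three agents, five goods,
`g₁,…,g₄` valued at `3` and `g₅` valued at `1` by every agent. -/
def vPropX : Fin 3 → Fin 5 → ℝ := fun _ j => if j = (4 : Fin 5) then 1 else 3

/-! Since the valuations are identical, the bundle values add up to `v(M) = 13` and the
proportional share is `13/3`. An agent without `g₅` reaches `13/3` after adding `g₅`, so her
bundle, worth a multiple of `3`, is worth at least `6`. The two agents without `g₅` thus hold at
least `12`, leaving at most `1` to the owner of `g₅`, who then misses a good and reaches at most
`1 + 3 < 13/3` after adding it. -/

section Allocation

variable {N I : Type*}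

def IsPropX [Fintype N] [DecidableEq I] (v : N → I → ℝ) (M : Finset I) (x : N → Finset I) : Prop :=
  ∀ i : N, ∀ g ∈ M \ x i, bval v i (x i) + v i g ≥ propShare v M i

variable [Fintype N] {x : N → Finset I} {S : Finset I}

theorem IsAllocation.exists_mem (hx : IsAllocation x S) {j : I} (hj : j ∈ S) :
    ∃ i, j ∈ x i := by
  rw [← hx.2] at hj
  simpa using hj

theorem IsAllocation.notMem_of_mem (hx : IsAllocation x S) {i k : N} (hik : i ≠ k) {j : I}
    (hj : j ∈ x k) : j ∉ x i :=
  Finset.disjoint_right.mp (hx.1 i k hik) hj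

theorem IsAllocation.sum_bval (hx : IsAllocation x S) (v : N → I → ℝ) (k : N) :
    ∑ i, bval v k (x i) = bval v k S := by
  unfold bval
  rw [← hx.2, Finset.sum_biUnion fun i _ h _ hih => hx.1 i h hih]

end Allocation

theorem vPropX_le_three (i : Fin 3) (j : Fin 5) : vPropX i j ≤ 3 := by
  unfold vPropX; split <;> norm_num

theorem bval_vPropX_comm (i k : Fin 3) (S : Finset (Fin 5)) :
    bval vPropX i S = bval vPropX k S := rfl

theorem bval_vPropX_of_notMem {S : Finset (Fin 5)} (h : 4 ∉ S) (i : Fin 3) :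
    bval vPropX i S = 3 * #S := by
  have hj : ∀ j ∈ S, vPropX i j = 3 := fun j hj => if_neg (ne_of_mem_of_not_mem hj h)
  rw [bval, Finset.sum_congr rfl hj]
  simp [mul_comm]

theorem bval_vPropX_univ (i : Fin 3) : bval vPropX i univ = 13 := by
  norm_num [bval, vPropX, Fin.sum_univ_five, Fin.ext_iff]

theorem propShare_vPropX (i : Fin 3) : propShare vPropX univ i = 13 / 3 := by
  simp [propShare, bval_vPropX_univ]

theorem six_le_bval_of_isPropX {x : Fin 3 → Finset (Fin 5)} (hpx : IsPropX vPropX univ x)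
    {i : Fin 3} (h : 4 ∉ x i) : 6 ≤ bval vPropX i (x i) := by
  have hprop := hpx i 4 (by simp [h])
  rw [bval_vPropX_of_notMem h, propShare_vPropX, show vPropX i 4 = 1 from if_pos rfl] at hprop
  rw [bval_vPropX_of_notMem h]
  have hcard : 1 < #(x i) := by exact_mod_cast (by linarith : (1 : ℝ) < #(x i))
  have : (2 : ℝ) ≤ #(x i) := by exact_mod_cast hcard
  linarith

theorem not_isPropX_vPropX {x : Fin 3 → Finset (Fin 5)} (hx : IsAllocation x univ) :
    ¬ IsPropX vPropX univ x := by
  intro hpx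
  obtain ⟨a, ha⟩ := hx.exists_mem (mem_univ 4)
  have hothers : ∀ i ∈ univ.erase a, 6 ≤ bval vPropX a (x i) := fun i hi =>
    (bval_vPropX_comm a i _).symm ▸
      six_le_bval_of_isPropX hpx (hx.notMem_of_mem (ne_of_mem_erase hi) ha)
  have hrest : 12 ≤ ∑ i ∈ univ.erase a, bval vPropX a (x i) := by
    have := card_nsmul_le_sum _ _ _ hothers
    rw [card_erase_of_mem (mem_univ a), card_univ, Fintype.card_fin, nsmul_eq_mul] at this
    norm_num only at this
    linarith
  have hsum := hx.sum_bval vPropX a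
  rw [← add_sum_erase _ _ (mem_univ a), bval_vPropX_univ] at hsum
  obtain ⟨g, hg⟩ : ∃ g, g ∉ x a := by
    by_contra! hall
    rw [eq_univ_of_forall hall, bval_vPropX_univ] at hsum
    linarith
  have hprop := hpx a g (by simp [hg])
  rw [propShare_vPropX] at hprop
  linarith [vPropX_le_three a g]

/-- In the goods instance `vPropX`, no allocation of the five
goods among the three agents is PropX. -/
theorem no_propx_allocation :
    ¬ ∃ x : Fin 3 → Finset (Fin 5),
      IsAllocation x (Finset.univ : Finset (Fin 5)) ∧
      ∀ i : Fin 3, ∀ g ∈ (Finset.univ : Finset (Fin 5)) \ x i,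
        bval vPropX i (x i) + vPropX i g ≥ propShare vPropX Finset.univ i := by
  rintro ⟨x, hx, hpx⟩
  exact not_isPropX_vPropX hx hpx
end

section
/- Let x be an EFX allocation of a set S ⊆ M of items, and let j ∈ M \ S be an item with v_{hj} ≤ 0 for every agent h. Let i be an agent such that v_{ij} < 0, agent i envies no other agent under x (i.e., v_i(x_i) ≥ v_i(x_h) for all h ∈ N), and every c ∈ x_i with v_{ic} < 0 satisfies v_{ic} ≤ v_{ij}. Then the allocation x' obtained from x by adding j to the bundle of agent i is an EFX allocation of S ∪ {j}. -/
open scoped Classical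
open Finset

/-!
Only the comparisons involving agent `i`'s bundle change. Any other agent sees that bundle grow
by an item she values at most `0`, which preserves whichever of the two EFX conditions held.
Agent `i` envied nobody, and since `j` is the mildest of her bads, removing any bad from her new
bundle leaves her with at least `v_i(x_i)`.
-/

section Allocation

variable {N I : Type*}

section Bval

variable (v : N → I → ℝ) (a : N) {A : Finset I} {j : I}

theorem bval_insert (hj : j ∉ A) : bval v a (insert j A) = v a j + bval v a A :=
  sum_insert hj

theorem bval_erase (hj : j ∈ A) : bval v a (A.erase j) = bval v a A - v a j :=
  sum_erase_eq_sub hj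

end Bval

section IsAllocation

variable [Fintype N] {x : N → Finset I} {S : Finset I} {j : I}

theorem IsAllocation.subset (hx : IsAllocation x S) (h : N) : x h ⊆ S :=
  hx.2 ▸ subset_biUnion_of_mem x (mem_univ h)

theorem IsAllocation.notMem (hx : IsAllocation x S) (hj : j ∉ S) (h : N) : j ∉ x h :=
  fun hjh => hj (hx.subset h hjh)

theorem IsAllocation.update_insert (hx : IsAllocation x S) (hj : j ∉ S) (i : N) :
    IsAllocation (Function.update x i (insert j (x i))) (insert j S) := by
  have hjx := hx.notMem hj
  refine ⟨fun a b hab => ?_, ?_⟩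
  · rcases eq_or_ne a i with rfl | ha
    · rw [Function.update_self, Function.update_of_ne hab.symm]
      exact disjoint_insert_left.mpr ⟨hjx b, hx.1 a b hab⟩
    rcases eq_or_ne b i with rfl | hb
    · rw [Function.update_self, Function.update_of_ne ha]
      exact disjoint_insert_right.mpr ⟨hjx a, hx.1 a b hab⟩
    · rw [Function.update_of_ne ha, Function.update_of_ne hb]
      exact hx.1 a b hab
  · rw [← hx.2, ← insert_erase (mem_univ i), biUnion_insert, biUnion_insert,
      Function.update_self, insert_union]
    congr 2
    exact biUnion_congr rfl fun h hh => Function.update_of_ne (ne_of_mem_erase hh) _ _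

end IsAllocation

def EFXToward (v : N → I → ℝ) (a : N) (A B : Finset I) : Prop :=
  (∀ g ∈ B, 0 < v a g → bval v a A ≥ bval v a (B.erase g)) ∨
    (∀ c ∈ A, v a c < 0 → bval v a (A.erase c) ≥ bval v a B)

theorem efx_iff_forall_efxToward (v : N → I → ℝ) (x : N → Finset I) :
    EFX v x ↔ ∀ a b, EFXToward v a (x a) (x b) :=
  Iff.rfl

section EFXToward

variable {v : N → I → ℝ} {a : N} {A B : Finset I} {j : I}

theorem efxToward_self : EFXToward v a A A :=
  Or.inl fun g hg hpos => by rw [bval_erase v a hg]; linarith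

theorem EFXToward.insert_right (h : EFXToward v a A B) (hj : j ∉ B) (hja : v a j ≤ 0) :
    EFXToward v a A (insert j B) := by
  rcases h with hgood | hbad
  · refine Or.inl fun g hg hpos => ?_
    have hgj : g ≠ j := by rintro rfl; linarith
    have hgB : g ∈ B := (mem_insert.mp hg).resolve_left hgj
    rw [erase_insert_of_ne hgj.symm, bval_insert v a fun h => hj (mem_of_mem_erase h)]
    linarith [hgood g hgB hpos]
  · refine Or.inr fun c hc hneg => ?_
    rw [bval_insert v a hj]
    linarith [hbad c hc hneg]

theorem efxToward_insert_left (hj : j ∉ A) (hnoenvy : bval v a A ≥ bval v a B)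
    (hworst : ∀ c ∈ A, v a c < 0 → v a c ≤ v a j) : EFXToward v a (insert j A) B := by
  refine Or.inr fun c hc hneg => ?_
  rcases mem_insert.mp hc with rfl | hcA
  · rwa [erase_insert hj]
  · have hcj : c ≠ j := by rintro rfl; exact hj hcA
    rw [erase_insert_of_ne hcj.symm, bval_insert v a fun h => hj (mem_of_mem_erase h),
      bval_erase v a hcA]
    linarith [hworst c hcA hneg]

end EFXToward

end Allocation

theorem efx_preserved_adding_bad_to_sink_general {N I : Type*} [Fintype N]
    (v : N → I → ℝ) (M S : Finset I) (x : N → Finset I) (j : I) (i : N)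
    (hx : IsAllocation x S) (hEFX : EFX v x)
    (hj : j ∈ M \ S) (hneg : ∀ h : N, v h j ≤ 0)
    (hsink : ∀ h : N, bval v i (x i) ≥ bval v i (x h))
    (hworst : ∀ c ∈ x i, v i c < 0 → v i c ≤ v i j) :
    IsAllocation (Function.update x i (insert j (x i))) (insert j S) ∧
      EFX v (Function.update x i (insert j (x i))) := by
  have hjS : j ∉ S := (mem_sdiff.mp hj).2
  have hjx := hx.notMem hjS
  refine ⟨hx.update_insert hjS i, (efx_iff_forall_efxToward _ _).mpr fun a b => ?_⟩
  rcases eq_or_ne a i with rfl | ha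
  · rcases eq_or_ne b a with rfl | hb
    · exact efxToward_self
    · rw [Function.update_self, Function.update_of_ne hb]
      exact efxToward_insert_left (hjx a) (hsink b) hworst
  · rw [Function.update_of_ne ha]
    rcases eq_or_ne b i with rfl | hb
    · rw [Function.update_self]
      exact EFXToward.insert_right (hEFX a b) (hjx b) (hneg a)
    · rw [Function.update_of_ne hb]
      exact hEFX a b

/-- Adding an item `j ∈ M \ S` that no agent values positively to
the bundle of a non-envious agent `i` with `v i j < 0` for whom `j` is (weakly)
the least painful of her bads preserves EFX. -/
theorem efx_preserved_adding_bad_to_sink {N I : Type*} [Fintype N] [Fintype I] [Nonempty N]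
    (v : N → I → ℝ) (M S : Finset I) (x : N → Finset I) (j : I) (i : N)
    (hS : S ⊆ M) (hx : IsAllocation x S) (hEFX : EFX v x)
    (hj : j ∈ M \ S) (hneg : ∀ h : N, v h j ≤ 0) (hij : v i j < 0)
    (hsink : ∀ h : N, bval v i (x i) ≥ bval v i (x h))
    (hworst : ∀ c ∈ x i, v i c < 0 → v i c ≤ v i j) :
    IsAllocation (Function.update x i (insert j (x i))) (insert j S) ∧
      EFX v (Function.update x i (insert j (x i))) :=
  efx_preserved_adding_bad_to_sink_general v M S x j i hx hEFX hj hneg hsink hworst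
end
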